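/- Let u > 0, a > 0, and set Δ = u² - 2s for s ∈ (-u²/2, u²/2). Then for all s ≥ 0 in this range, -(a/√Δ)·tanh(a√Δ) + (a/u)·tanh(au) + 2(a²/u²)·s ≥ 0, and for all s < 0 in this range, the same expression is < 0. -/

import Mathlib

/-! With `g t = (t - tanh t) / t³` and `v = √(u² - 2s)` the expression equals
`a⁴ v² (g (a v) - g (a u)) + 2 s a tanh (a u) / u³`. The derivative of `g` has numerator
`t² (3 tanh t + t tanh² t - 3 t) ≤ 0`, so `g` is decreasing on `(0, ∞)`; since `v ≤ u` exactly
when `0 ≤ s`, both summands have the sign of `s`. -/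

open Real Set

theorem Real.hasDerivAt_tanh (x : ℝ) : HasDerivAt tanh (1 - tanh x ^ 2) x := by
  have h := (hasDerivAt_sinh x).div (hasDerivAt_cosh x) (cosh_pos x).ne'
  have hfun : sinh / cosh = tanh := funext fun y => (tanh_eq_sinh_div_cosh y).symm
  rw [hfun] at h
  refine h.congr_deriv ?_
  rw [tanh_eq_sinh_div_cosh]
  field_simp

theorem Real.tanh_pos {x : ℝ} (hx : 0 < x) : 0 < tanh x := by
  rw [tanh_eq_sinh_div_cosh]
  exact div_pos (sinh_pos_iff.2 hx) (cosh_pos x)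

theorem Real.mul_one_sub_tanh_sq_le_tanh {t : ℝ} (ht : 0 ≤ t) : t * (1 - tanh t ^ 2) ≤ tanh t := by
  have hsinh : 2 * t ≤ 2 * sinh t * cosh t := sinh_two_mul t ▸ self_le_sinh_iff.2 (by linarith)
  have hc := cosh_pos t
  rw [tanh_eq_sinh_div_cosh, ← sub_nonneg]
  have key : sinh t / cosh t - t * (1 - (sinh t / cosh t) ^ 2) =
      (sinh t * cosh t - t) / cosh t ^ 2 := by
    field_simp
    linear_combination (-t) * cosh_sq_sub_sinh_sq t
  rw [key]
  exact div_nonneg (by linarith) (by positivity)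

theorem Real.three_mul_tanh_add_mul_tanh_sq_le {t : ℝ} (ht : 0 ≤ t) :
    3 * tanh t + t * tanh t ^ 2 ≤ 3 * t := by
  set h : ℝ → ℝ := fun y => 3 * y - 3 * tanh y - y * tanh y ^ 2
  have hderiv (y : ℝ) : HasDerivAt h (2 * tanh y * (tanh y - y * (1 - tanh y ^ 2))) y := by
    refine ((((hasDerivAt_id' y).const_mul 3).sub ((hasDerivAt_tanh y).const_mul 3)).sub
      ((hasDerivAt_id' y).mul ((hasDerivAt_tanh y).pow 2))).congr_deriv ?_
    simp only [Pi.pow_apply]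
    ring
  have hmono : MonotoneOn h (Ici 0) := by
    refine monotoneOn_of_deriv_nonneg (convex_Ici 0)
      (fun y _ => (hderiv y).continuousAt.continuousWithinAt)
      (fun y _ => (hderiv y).differentiableAt.differentiableWithinAt) fun y hy => ?_
    rw [interior_Ici, mem_Ioi] at hy
    rw [(hderiv y).deriv]
    have := mul_one_sub_tanh_sq_le_tanh hy.le
    have := tanh_pos hy
    positivity
  have := hmono self_mem_Ici ht ht
  simp only [h, tanh_zero] at this
  linarith

noncomputable def tanhDeficit (t : ℝ) : ℝ := (t - tanh t) / t ^ 3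

theorem antitoneOn_tanhDeficit : AntitoneOn tanhDeficit (Ioi 0) := by
  have hderiv {t : ℝ} (ht : 0 < t) : HasDerivAt tanhDeficit
      (t ^ 2 * (3 * tanh t + t * tanh t ^ 2 - 3 * t) / (t ^ 3) ^ 2) t := by
    refine (((hasDerivAt_id' t).sub (hasDerivAt_tanh t)).div (hasDerivAt_pow 3 t)
      (by positivity)).congr_deriv ?_
    simp only [Pi.sub_apply]
    ring
  refine antitoneOn_of_deriv_nonpos (convex_Ioi 0)
    (fun t ht => (hderiv ht).continuousAt.continuousWithinAt)
    (fun t ht => (hderiv (interior_subset ht)).differentiableAt.differentiableWithinAt)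
    fun t ht => ?_
  rw [interior_Ioi] at ht
  rw [(hderiv ht).deriv]
  have := three_mul_tanh_add_mul_tanh_sq_le ht.le
  exact div_nonpos_of_nonpos_of_nonneg
    (mul_nonpos_of_nonneg_of_nonpos (by positivity) (by linarith)) (by positivity)

theorem tanh_combination_eq_tanhDeficit {a u v s : ℝ} (ha : a ≠ 0) (hu : u ≠ 0) (hv : v ≠ 0)
    (hvs : v ^ 2 = u ^ 2 - 2 * s) :
    -(a / v) * tanh (a * v) + (a / u) * tanh (a * u) + 2 * (a ^ 2 / u ^ 2) * s =
      a ^ 4 * v ^ 2 * (tanhDeficit (a * v) - tanhDeficit (a * u)) +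
        2 * s * a * tanh (a * u) / u ^ 3 := by
  have hs : s = (u ^ 2 - v ^ 2) / 2 := by linarith
  subst hs
  unfold tanhDeficit
  field_simp
  ring

theorem stmt_8 (u a : ℝ) (hu : 0 < u) (ha : 0 < a) (s : ℝ)
    (hs : s ∈ Set.Ioo (-(u ^ 2) / 2) (u ^ 2 / 2)) :
    (0 ≤ s →
      0 ≤ -(a / Real.sqrt (u ^ 2 - 2 * s)) * Real.tanh (a * Real.sqrt (u ^ 2 - 2 * s)) +
        (a / u) * Real.tanh (a * u) + 2 * (a ^ 2 / u ^ 2) * s) ∧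
    (s < 0 →
      -(a / Real.sqrt (u ^ 2 - 2 * s)) * Real.tanh (a * Real.sqrt (u ^ 2 - 2 * s)) +
        (a / u) * Real.tanh (a * u) + 2 * (a ^ 2 / u ^ 2) * s < 0) := by
  have hΔ : 0 < u ^ 2 - 2 * s := by linarith [hs.2]
  set v := √(u ^ 2 - 2 * s)
  have hv : 0 < v := sqrt_pos.2 hΔ
  have hvs : v ^ 2 = u ^ 2 - 2 * s := sq_sqrt hΔ.le
  rw [tanh_combination_eq_tanhDeficit ha.ne' hu.ne' hv.ne' hvs]
  have htanh := tanh_pos (mul_pos ha hu)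
  have hmono {x y : ℝ} (hx : 0 < x) (hy : 0 < y) (hxy : x ≤ y) :
      tanhDeficit (a * y) ≤ tanhDeficit (a * x) :=
    antitoneOn_tanhDeficit (mul_pos ha hx) (mul_pos ha hy) (mul_le_mul_of_nonneg_left hxy ha.le)
  constructor
  · intro hs0
    have hvu : v ≤ u := by nlinarith
    have hg := hmono hv hu hvu
    have : 0 ≤ tanhDeficit (a * v) - tanhDeficit (a * u) := by linarith
    positivity
  · intro hs0
    have huv : u ≤ v := by nlinarith
    have hg := hmono hu hv huv
    have : a ^ 4 * v ^ 2 * (tanhDeficit (a * v) - tanhDeficit (a * u)) ≤ 0 :=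
      mul_nonpos_of_nonneg_of_nonpos (by positivity) (by linarith)
    have : 2 * s * a * tanh (a * u) / u ^ 3 < 0 :=
      div_neg_of_neg_of_pos (by nlinarith [mul_pos ha htanh]) (by positivity)
    linarith
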